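/- The probability Q̃1 = P( Ps·Z > τ(G), Z < (G/α0 − 1)·(P0·G + 1)/Ps, log2(1+τ(G)) < Rs, G > α0 ) equals Σ_{i=1}^{M} C(M,i)·(−1)^i·e^{i/Ps}·[ v(α1, α0, i·P0/(Ps·α0), (i/Ps)·(1/α0 − P0) + 1) − u(α0, α1, i/(Ps·α0)) ], where C(M,i) is the binomial coefficient. -/

import Mathlib

open MeasureTheory ProbabilityTheory Real

/-- The interference threshold `τ(g) = max{0, g/α₀ − 1}`. -/
noncomputable def tau (α0 g : ℝ) : ℝ := max 0 (g / α0 - 1)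

/-- The Gaussian error function `erf(x) = (2/√π) ∫₀ˣ e^{−t²} dt`. -/
noncomputable def erf (x : ℝ) : ℝ :=
  2 / Real.sqrt Real.pi * ∫ t in (0 : ℝ)..x, Real.exp (-t ^ 2)

/-- `u(a,b,c) = (e^{−a(c+1)} − e^{−b(c+1)}) / (c+1)`. -/
noncomputable def uFun (a b c : ℝ) : ℝ :=
  (Real.exp (-a * (c + 1)) - Real.exp (-b * (c + 1))) / (c + 1)

/-- `v(b,a,A,B) = (√π e^{B²/(4A)} / (2√A)) (erf(√A (b + B/(2A))) − erf(√A (a + B/(2A))))`. -/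
noncomputable def vFun (b a A B : ℝ) : ℝ :=
  Real.sqrt Real.pi * Real.exp (B ^ 2 / (4 * A)) / (2 * Real.sqrt A) *
    (erf (Real.sqrt A * (b + B / (2 * A))) - erf (Real.sqrt A * (a + B / (2 * A))))

/-!
On `{G > α₀}` the threshold is `τ(G) = G/α₀ − 1` and `log₂(1 + τ(G)) < R_s` means `G < α₁`, so
the event says that `(G, Z)` lies in the region between the graphs of `ℓ(g) = (g/α₀ − 1)/P_s`
and `h(g) = (g/α₀ − 1)(P₀ g + 1)/P_s` over `(α₀, α₁)`. Since `G` is independent of `Z` and `Z`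
has distribution function `F(z) = (1 − e^{−z})^M`, Fubini gives
`Q̃₁ = ∫_{α₀}^{α₁} e^{−g} (F(h g) − F(ℓ g)) dg`. Expanding `F` binomially leaves integrals of
`e^{−(linear)}`, which give `u`, and of `e^{−(quadratic)}`, which after completing the square
give `v`.
-/

open Set

lemma erf_sub_erf (x y : ℝ) :
    erf y - erf x = 2 / √π * ∫ t in x..y, exp (-t ^ 2) := by
  have hint : ∀ a b : ℝ, IntervalIntegrable (fun t : ℝ => exp (-t ^ 2)) volume a b :=
    fun a b => (by fun_prop : Continuous fun t : ℝ => exp (-t ^ 2)).intervalIntegrable a b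
  rw [erf, erf, ← mul_sub, intervalIntegral.integral_interval_sub_left (hint 0 y) (hint 0 x)]

lemma integral_exp_neg_mul (k a b : ℝ) (hk : k ≠ 0) :
    ∫ x in a..b, exp (-(k * x)) = (exp (-(k * a)) - exp (-(k * b))) / k := by
  simp_rw [← neg_mul]
  rw [intervalIntegral.integral_comp_mul_left (fun t => exp t) (neg_ne_zero.mpr hk),
    integral_exp, smul_eq_mul]
  field_simp
  ring

lemma uFun_eq_integral (a b c : ℝ) (hc : c + 1 ≠ 0) :
    uFun a b c = ∫ x in a..b, exp (-((c + 1) * x)) := by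
  rw [integral_exp_neg_mul _ _ _ hc, uFun]
  ring_nf

lemma vFun_eq_integral (b a A B : ℝ) (hA : 0 < A) :
    vFun b a A B = ∫ x in a..b, exp (-(A * x ^ 2 + B * x)) := by
  have hs : √A ≠ 0 := (Real.sqrt_pos.mpr hA).ne'
  have hs2 : √A ^ 2 = A := Real.sq_sqrt hA.le
  have hsquare : ∀ x : ℝ, exp (-(A * x ^ 2 + B * x)) =
      exp (B ^ 2 / (4 * A)) * exp (-(√A * x + √A * (B / (2 * A))) ^ 2) := by
    intro x
    rw [← exp_add]
    congr 1
    field_simp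
    linear_combination (4 * B ^ 2 + 16 * A * x * B + 16 * A ^ 2 * x ^ 2) * hs2
  simp_rw [hsquare]
  rw [intervalIntegral.integral_const_mul,
    intervalIntegral.integral_comp_mul_add (fun t => exp (-t ^ 2)) hs, smul_eq_mul, ← mul_add,
    ← mul_add, vFun, erf_sub_erf]
  have hπ : √π ≠ 0 := (Real.sqrt_pos.mpr Real.pi_pos).ne'
  field_simp

lemma one_sub_exp_neg_pow_sub (M : ℕ) (x y : ℝ) :
    (1 - exp (-x)) ^ M - (1 - exp (-y)) ^ M =
      ∑ i ∈ Finset.Icc 1 M,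
        (M.choose i : ℝ) * (-1) ^ i * (exp (-(i * x)) - exp (-(i * y))) := by
  have expand : ∀ x : ℝ, (1 - exp (-x)) ^ M =
      ∑ i ∈ Finset.range (M + 1), (M.choose i : ℝ) * (-1) ^ i * exp (-(i * x)) := by
    intro x
    rw [sub_eq_neg_add, add_pow]
    refine Finset.sum_congr rfl fun i _ => ?_
    rw [one_pow, mul_one, neg_pow, ← exp_nat_mul, mul_neg]
    ring
  rw [expand, expand, ← Finset.sum_sub_distrib, Finset.range_eq_Ico,
    Finset.sum_eq_sum_Ico_succ_bot M.succ_pos, zero_add, Nat.succ_eq_add_one,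
    Finset.Ico_add_one_right_eq_Icc]
  simp only [mul_sub, Nat.cast_zero, zero_mul, sub_self, zero_add]

lemma integral_exp_neg_sub_linear (a b α0 Ps c : ℝ) (hα0 : α0 ≠ 0) (hPs : Ps ≠ 0)
    (hc : c / (Ps * α0) + 1 ≠ 0) :
    ∫ g in a..b, exp (-g) * exp (-(c * ((g / α0 - 1) / Ps))) =
      exp (c / Ps) * uFun a b (c / (Ps * α0)) := by
  have hlin : ∀ g : ℝ, exp (-g) * exp (-(c * ((g / α0 - 1) / Ps))) =
      exp (c / Ps) * exp (-((c / (Ps * α0) + 1) * g)) := by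
    intro g
    rw [← exp_add, ← exp_add]
    congr 1
    field_simp
    ring
  simp_rw [hlin]
  rw [intervalIntegral.integral_const_mul, uFun_eq_integral _ _ _ hc]

lemma integral_exp_neg_sub_quadratic (a b α0 Ps P0 c : ℝ) (hα0 : α0 ≠ 0) (hPs : Ps ≠ 0)
    (hA : 0 < c * P0 / (Ps * α0)) :
    ∫ g in a..b, exp (-g) * exp (-(c * ((g / α0 - 1) * (P0 * g + 1) / Ps))) =
      exp (c / Ps) * vFun b a (c * P0 / (Ps * α0)) (c / Ps * (1 / α0 - P0) + 1) := by
  have hquad : ∀ g : ℝ, exp (-g) * exp (-(c * ((g / α0 - 1) * (P0 * g + 1) / Ps))) =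
      exp (c / Ps) *
        exp (-(c * P0 / (Ps * α0) * g ^ 2 + (c / Ps * (1 / α0 - P0) + 1) * g)) := by
    intro g
    rw [← exp_add, ← exp_add]
    congr 1
    field_simp
    ring
  simp_rw [hquad]
  rw [intervalIntegral.integral_const_mul, vFun_eq_integral _ _ _ _ hA]

lemma integral_exp_neg_mul_pow_sub (M : ℕ) {α0 Ps P0 : ℝ} (hα0 : 0 < α0) (hPs : 0 < Ps)
    (hP0 : 0 < P0) (a b : ℝ) :
    ∫ g in a..b, exp (-g) * ((1 - exp (-((g / α0 - 1) * (P0 * g + 1) / Ps))) ^ M -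
        (1 - exp (-((g / α0 - 1) / Ps))) ^ M) =
      ∑ i ∈ Finset.Icc 1 M,
        (M.choose i : ℝ) * (-1 : ℝ) ^ i * exp ((i : ℝ) / Ps) *
          (vFun b a ((i : ℝ) * P0 / (Ps * α0)) (((i : ℝ) / Ps) * (1 / α0 - P0) + 1) -
            uFun a b ((i : ℝ) / (Ps * α0))) := by
  simp_rw [one_sub_exp_neg_pow_sub, Finset.mul_sum]
  rw [intervalIntegral.integral_finsetSum fun i _ => by
    exact (by fun_prop : Continuous _).intervalIntegrable a b]
  refine Finset.sum_congr rfl fun i hi => ?_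
  have hi : (0 : ℝ) < i := Nat.cast_pos.mpr (Finset.mem_Icc.mp hi).1
  rw [mul_assoc _ (exp _), mul_sub,
    ← integral_exp_neg_sub_quadratic _ _ _ _ _ _ hα0.ne' hPs.ne' (by positivity),
    ← integral_exp_neg_sub_linear _ _ _ _ _ hα0.ne' hPs.ne' (by positivity),
    ← intervalIntegral.integral_sub ((by fun_prop : Continuous _).intervalIntegrable a b)
      ((by fun_prop : Continuous _).intervalIntegrable a b),
    ← intervalIntegral.integral_const_mul]
  congr 1 with g
  ring

namespace ProbabilityTheory

variable {Ω : Type*} [MeasurableSpace Ω] {μ : Measure Ω}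

lemma iIndepFun.indepFun_head_tail {β : Type*} [MeasurableSpace β] {n : ℕ} {X : Ω → β}
    {Y : Fin n → Ω → β} (h : iIndepFun (Fin.cons X Y : Fin (n + 1) → Ω → β) μ)
    (hX : Measurable X) (hY : ∀ i, Measurable (Y i)) :
    IndepFun X (fun ω i => Y i ω) μ := by
  have hmeas : ∀ i, Measurable ((Fin.cons X Y : Fin (n + 1) → Ω → β) i) :=
    Fin.cases hX hY
  have hsucc : ∀ i : Fin n, i.succ ∈ Finset.univ.map (Fin.succEmb n) := by simp
  have hdisj : Disjoint ({0} : Finset (Fin (n + 1))) (Finset.univ.map (Fin.succEmb n)) := by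
    simp [Fin.succ_ne_zero]
  exact (h.indepFun_finset _ _ hdisj hmeas).comp
    (measurable_pi_apply (⟨0, Finset.mem_singleton_self 0⟩ : ({0} : Finset (Fin (n + 1)))))
    (measurable_pi_lambda (fun v i => v ⟨i.succ, hsucc i⟩) fun i => measurable_pi_apply _)

lemma iIndepFun.measure_iSup_le {ι : Type*} [Fintype ι] [Nonempty ι] {H : ι → Ω → ℝ}
    (h : iIndepFun H μ) (z : ℝ) :
    μ ((fun ω => ⨆ i, H i ω) ⁻¹' Iic z) = ∏ i, μ (H i ⁻¹' Iic z) := by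
  have hset : (fun ω => ⨆ i, H i ω) ⁻¹' Iic z = ⋂ i, H i ⁻¹' Iic z := by
    ext ω
    simp [ciSup_le_iff (Set.finite_range fun i => H i ω).bddAbove]
  rw [hset, h.meas_iInter fun i => ⟨Iic z, measurableSet_Iic, rfl⟩]

lemma measure_iSup_eq_null {ι : Type*} [Finite ι] [Nonempty ι] {H : ι → Ω → ℝ} {x : ℝ}
    (h : ∀ i, μ (H i ⁻¹' {x}) = 0) :
    μ {ω | ⨆ i, H i ω = x} = 0 := by
  refine measure_mono_null (fun ω hω => ?_) (measure_iUnion_null h)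
  obtain ⟨i, hi⟩ := exists_eq_ciSup_of_finite (f := fun i => H i ω)
  exact mem_iUnion.mpr ⟨i, hi.trans hω⟩

instance nullSingletonClass_expMeasure (r : ℝ) : NullSingletonClass (expMeasure r) := by
  unfold expMeasure gammaMeasure
  infer_instance

lemma measureReal_Iic_expMeasure_one {z : ℝ} (hz : 0 ≤ z) :
    (expMeasure 1).real (Iic z) = 1 - exp (-z) := by
  have := isProbabilityMeasure_expMeasure one_pos
  rw [← cdf_eq_real, cdf_expMeasure_eq one_pos, if_pos hz, one_mul]

lemma measureReal_map_iSup_Ioo {ι : Type*} [Fintype ι] [Nonempty ι] [IsFiniteMeasure μ]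
    {H : ι → Ω → ℝ} (hind : iIndepFun H μ) (hmeas : ∀ i, Measurable (H i))
    (hlaw : ∀ i, μ.map (H i) = expMeasure 1) {a b : ℝ} (ha : 0 ≤ a) (hab : a ≤ b) :
    (μ.map fun ω => ⨆ i, H i ω).real (Ioo a b) =
      (1 - exp (-b)) ^ Fintype.card ι - (1 - exp (-a)) ^ Fintype.card ι := by
  have hZ : Measurable fun ω => ⨆ i, H i ω := Measurable.iSup hmeas
  have hcdf : ∀ z, 0 ≤ z → (μ.map fun ω => ⨆ i, H i ω).real (Iic z) =
      (1 - exp (-z)) ^ Fintype.card ι := by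
    intro z hz
    rw [map_measureReal_apply hZ measurableSet_Iic, measureReal_def,
      hind.measure_iSup_le, ENNReal.toReal_prod, ← Finset.card_univ, ← Finset.prod_const]
    refine Finset.prod_congr rfl fun i _ => ?_
    rw [← measureReal_def, ← map_measureReal_apply (hmeas i) measurableSet_Iic, hlaw i,
      measureReal_Iic_expMeasure_one hz]
  have hatom : (μ.map fun ω => ⨆ i, H i ω) {b} = 0 := by
    rw [Measure.map_apply hZ (measurableSet_singleton b)]
    exact measure_iSup_eq_null fun i => by
      rw [← Measure.map_apply (hmeas i) (measurableSet_singleton b), hlaw, measure_singleton]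
  rw [measureReal_congr (Ioo_ae_eq_Ioc' hatom), ← Iic_sdiff_Iic,
    measureReal_sdiff (Iic_subset_Iic.2 hab) measurableSet_Iic, hcdf b (ha.trans hab), hcdf a ha]

lemma measureReal_expMeasure_prod_regionBetween (ν : Measure ℝ) [IsFiniteMeasure ν]
    {a b : ℝ} (ha : 0 ≤ a) (hab : a ≤ b) {ℓ h : ℝ → ℝ} (hℓ : Measurable ℓ)
    (hh : Measurable h) :
    ((expMeasure 1).prod ν).real (regionBetween ℓ h (Ioo a b)) =
      ∫ g in a..b, exp (-g) * ν.real (Ioo (ℓ g) (h g)) := by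
  have hT : MeasurableSet {p : ℝ × ℝ | p.2 ∈ Ioo (ℓ p.1) (h p.1)} :=
    (measurableSet_lt (hℓ.comp measurable_fst) measurable_snd).inter
      (measurableSet_lt measurable_snd (hh.comp measurable_fst))
  have hslice : Measurable fun g => ν (Ioo (ℓ g) (h g)) := measurable_measure_prodMk_left hT
  have hintegrand : Measurable fun g => exp (-g) * ν.real (Ioo (ℓ g) (h g)) :=
    (measurable_exp.comp measurable_neg).mul hslice.ennreal_toReal
  have hsection : ∀ g, ν (Prod.mk g ⁻¹' regionBetween ℓ h (Ioo a b)) =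
      (Ioo a b).indicator (fun g => ν (Ioo (ℓ g) (h g))) g := by
    intro g
    by_cases hg : g ∈ Ioo a b
    · rw [indicator_of_mem hg]
      congr 1
      ext z
      exact and_iff_right hg
    · rw [indicator_of_notMem hg, ← measure_empty (μ := ν)]
      congr 1
      ext z
      exact iff_of_false (fun hz => hg hz.1) id
  rw [intervalIntegral.integral_of_le hab, integral_Ioc_eq_integral_Ioo,
    integral_eq_lintegral_of_nonneg_ae (ae_of_all _ fun g => by positivity)
      hintegrand.aestronglyMeasurable, measureReal_def,
    Measure.prod_apply (measurableSet_regionBetween hℓ hh measurableSet_Ioo),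
    lintegral_congr hsection, lintegral_indicator measurableSet_Ioo, expMeasure, gammaMeasure,
    setLIntegral_withDensity_eq_setLIntegral_mul _
      (show Measurable (gammaPDF 1 1) from (measurable_gammaPDFReal 1 1).ennreal_ofReal) hslice
      measurableSet_Ioo]
  refine congrArg _ (setLIntegral_congr_fun measurableSet_Ioo fun g hg => ?_)
  rw [Pi.mul_apply, ENNReal.ofReal_mul (exp_nonneg _), ofReal_measureReal,
    show gammaPDF 1 1 g = exponentialPDF 1 g from rfl,
    exponentialPDF_of_nonneg (ha.trans hg.1.le)]
  simp only [one_mul]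

lemma measureReal_preimage_regionBetween_eq_integral [IsFiniteMeasure μ] {n : ℕ}
    (hn : 0 < n) {G : Ω → ℝ} {H : Fin n → Ω → ℝ}
    (hindep : iIndepFun (Fin.cons G H : Fin (n + 1) → Ω → ℝ) μ)
    (hGmeas : Measurable G) (hHmeas : ∀ i, Measurable (H i))
    (hGlaw : μ.map G = expMeasure 1) (hHlaw : ∀ i, μ.map (H i) = expMeasure 1)
    {a b : ℝ} (ha : 0 ≤ a) (hab : a ≤ b) {ℓ h : ℝ → ℝ} (hℓ : Measurable ℓ)
    (hh : Measurable h) (hℓ_nonneg : ∀ g ∈ Icc a b, 0 ≤ ℓ g)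
    (hℓh : ∀ g ∈ Icc a b, ℓ g ≤ h g) :
    μ.real ((fun ω => (G ω, ⨆ i, H i ω)) ⁻¹' regionBetween ℓ h (Ioo a b)) =
      ∫ g in a..b, exp (-g) * ((1 - exp (-h g)) ^ n - (1 - exp (-ℓ g)) ^ n) := by
  have : Nonempty (Fin n) := ⟨⟨0, hn⟩⟩
  have hZmeas : Measurable fun ω => ⨆ i, H i ω := Measurable.iSup hHmeas
  have hjoint : μ.map (fun ω => (G ω, ⨆ i, H i ω)) =
      (expMeasure 1).prod (μ.map fun ω => ⨆ i, H i ω) := by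
    rw [← hGlaw, ← indepFun_iff_map_prod_eq_prod_map_map hGmeas.aemeasurable
      hZmeas.aemeasurable]
    exact (hindep.indepFun_head_tail hGmeas hHmeas).comp measurable_id
      (Measurable.iSup fun i => measurable_pi_apply i)
  rw [← map_measureReal_apply (hGmeas.prodMk hZmeas)
      (measurableSet_regionBetween hℓ hh measurableSet_Ioo), hjoint,
    measureReal_expMeasure_prod_regionBetween _ ha hab hℓ hh]
  refine intervalIntegral.integral_congr fun g hg => ?_
  rw [uIcc_of_le hab] at hg
  have hHindep : iIndepFun H μ := hindep.precomp (g := Fin.succ) (Fin.succ_injective n)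
  rw [measureReal_map_iSup_Ioo hHindep hHmeas hHlaw (hℓ_nonneg g hg) (hℓh g hg),
    Fintype.card_fin]

end ProbabilityTheory

lemma event_eq_preimage_regionBetween {Ω : Type*} {α0 Ps P0 Rs : ℝ} (hα0 : 0 < α0)
    (hPs : 0 < Ps) (G Z : Ω → ℝ) :
    {ω | Ps * Z ω > tau α0 (G ω) ∧ Z ω < (G ω / α0 - 1) * (P0 * G ω + 1) / Ps ∧
        logb 2 (1 + tau α0 (G ω)) < Rs ∧ G ω > α0} =
      (fun ω => (G ω, Z ω)) ⁻¹' regionBetween (fun g => (g / α0 - 1) / Ps)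
        (fun g => (g / α0 - 1) * (P0 * g + 1) / Ps) (Ioo α0 (2 ^ Rs * α0)) := by
  ext ω
  simp only [mem_ofPred_eq, mem_preimage, regionBetween]
  by_cases hg : α0 < G ω
  · have htau : tau α0 (G ω) = G ω / α0 - 1 :=
      max_eq_right (sub_nonneg.mpr ((one_le_div hα0).mpr hg.le))
    have hlog : logb 2 (1 + tau α0 (G ω)) < Rs ↔ G ω < 2 ^ Rs * α0 := by
      rw [htau, add_sub_cancel, logb_lt_iff_lt_rpow one_lt_two (div_pos (hα0.trans hg) hα0),
        div_lt_iff₀ hα0]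
    have hlow : Ps * Z ω > tau α0 (G ω) ↔ (G ω / α0 - 1) / Ps < Z ω := by
      rw [htau, gt_iff_lt, div_lt_iff₀ hPs, mul_comm]
    rw [hlog, hlow]
    simp only [mem_Ioo, gt_iff_lt, hg, true_and, and_true]
    tauto
  · simp [mem_Ioo, hg]

theorem hsic_pa_Q1_closed_form_general
    {Ω : Type*} [MeasurableSpace Ω] (μ : Measure Ω) [IsProbabilityMeasure μ]
    (M : ℕ) (hM : 1 ≤ M)
    (P0 Ps R0 Rs : ℝ) (hP0 : 0 < P0) (hPs : 0 < Ps) (hR0 : 0 < R0) (hRs : 0 < Rs)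
    (ε0 εs α0 α1 : ℝ)
    (hε0 : ε0 = 2 ^ R0 - 1) (hεs : εs = 2 ^ Rs - 1)
    (hα0 : α0 = ε0 / P0) (hα1 : α1 = (1 + εs) * α0)
    (G : Ω → ℝ) (H : Fin M → Ω → ℝ)
    (hGmeas : Measurable G) (hHmeas : ∀ m, Measurable (H m))
    (hGdist : Measure.map G μ = expMeasure 1)
    (hHdist : ∀ m, Measure.map (H m) μ = expMeasure 1)
    (hIndep : iIndepFun
      (Fin.cons G H : Fin (M + 1) → Ω → ℝ) μ)
    (Z : Ω → ℝ) (hZ : ∀ ω, Z ω = ⨆ m : Fin M, H m ω)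
    :
    (μ {ω | Ps * Z ω > tau α0 (G ω) ∧
            Z ω < (G ω / α0 - 1) * (P0 * G ω + 1) / Ps ∧
            Real.logb 2 (1 + tau α0 (G ω)) < Rs ∧ G ω > α0}).toReal =
      ∑ i ∈ Finset.Icc 1 M,
        (M.choose i : ℝ) * (-1 : ℝ) ^ i * Real.exp ((i : ℝ) / Ps) *
          (vFun α1 α0 ((i : ℝ) * P0 / (Ps * α0)) (((i : ℝ) / Ps) * (1 / α0 - P0) + 1) -
            uFun α0 α1 ((i : ℝ) / (Ps * α0))) := by
  have hα0pos : 0 < α0 := by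
    rw [hα0, hε0]
    exact div_pos (sub_pos.mpr (one_lt_rpow one_lt_two hR0)) hP0
  have hα1' : 2 ^ Rs * α0 = α1 := by rw [hα1, hεs, add_sub_cancel]
  have hα01 : α0 ≤ α1 :=
    hα1' ▸ le_mul_of_one_le_left hα0pos.le (one_le_rpow one_le_two hRs.le)
  have hτ : ∀ g ∈ Icc α0 α1, 0 ≤ g / α0 - 1 := fun g hg =>
    sub_nonneg.mpr ((one_le_div hα0pos).mpr hg.1)
  obtain rfl : Z = fun ω => ⨆ m, H m ω := funext hZ
  rw [← measureReal_def, event_eq_preimage_regionBetween hα0pos hPs, hα1',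
    measureReal_preimage_regionBetween_eq_integral hM hIndep hGmeas hHmeas hGdist hHdist
      hα0pos.le hα01 (by fun_prop) (by fun_prop) (fun g hg => div_nonneg (hτ g hg) hPs.le)
      fun g hg => div_le_div_of_nonneg_right (le_mul_of_one_le_right (hτ g hg)
        (le_add_of_nonneg_left (mul_nonneg hP0.le (hα0pos.le.trans hg.1)))) hPs.le]
  exact integral_exp_neg_mul_pow_sub M hα0pos hPs hP0 α0 α1

/-- closed form for the probability `Q̃₁` appearing in the proof of
Theorem 1 for the HSIC-PA scheme. -/
theorem hsic_pa_Q1_closed_form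
    {Ω : Type*} [MeasurableSpace Ω] (μ : Measure Ω) [IsProbabilityMeasure μ]
    (M : ℕ) (hM : 1 ≤ M)
    (P0 Ps R0 Rs : ℝ) (hP0 : 0 < P0) (hPs : 0 < Ps) (hR0 : 0 < R0) (hRs : 0 < Rs)
    (ε0 εs α0 αs α1 : ℝ)
    (hε0 : ε0 = 2 ^ R0 - 1) (hεs : εs = 2 ^ Rs - 1)
    (hα0 : α0 = ε0 / P0) (hαs : αs = εs / Ps) (hα1 : α1 = (1 + εs) * α0)
    (G : Ω → ℝ) (H : Fin M → Ω → ℝ)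
    (hGmeas : Measurable G) (hHmeas : ∀ m, Measurable (H m))
    (hGnn : ∀ ω, 0 ≤ G ω) (hHnn : ∀ m ω, 0 ≤ H m ω)
    (hGdist : Measure.map G μ = expMeasure 1)
    (hHdist : ∀ m, Measure.map (H m) μ = expMeasure 1)
    (hIndep : iIndepFun
      (Fin.cons G H : Fin (M + 1) → Ω → ℝ) μ)
    (Z : Ω → ℝ) (hZ : ∀ ω, Z ω = ⨆ m : Fin M, H m ω)
    :
    (μ {ω | Ps * Z ω > tau α0 (G ω) ∧
            Z ω < (G ω / α0 - 1) * (P0 * G ω + 1) / Ps ∧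
            Real.logb 2 (1 + tau α0 (G ω)) < Rs ∧ G ω > α0}).toReal =
      ∑ i ∈ Finset.Icc 1 M,
        (M.choose i : ℝ) * (-1 : ℝ) ^ i * Real.exp ((i : ℝ) / Ps) *
          (vFun α1 α0 ((i : ℝ) * P0 / (Ps * α0)) (((i : ℝ) / Ps) * (1 / α0 - P0) + 1) -
            uFun α0 α1 ((i : ℝ) / (Ps * α0))) :=
  hsic_pa_Q1_closed_form_general μ M hM P0 Ps R0 Rs hP0 hPs hR0 hRs ε0 εs α0 α1 hε0 hεs hα0 hα1 G H
    hGmeas hHmeas hGdist hHdist hIndep Z hZ
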